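/- Let X be a generating, cogenerating, functorially finite full subcategory of an abelian category A, closed under isomorphisms and direct summands, and let d ≥ 1. Suppose Ext^i_A(X, X') = 0 for all X, X' ∈ X and 0 < i < d. Then for every epimorphism f₁ : X₁ → X₀ in X there exists a sequence X_{d+1} → X_d → ⋯ → X₂ → X₁ → X₀ in X, exact in A, such that for each 1 ≤ i ≤ d the map f_{i+1} is a weak kernel of f_i and f_i is a weak cokernel of f_{i+1}. -/

import Mathlib

open CategoryTheory CategoryTheory.Limits

universe w v u

variable {A : Type u} [Category.{v} A] [Abelian A]

/-- `k : a ⟶ b` is a weak kernel of `f : b ⟶ c` relative to the full subcategory `X`. -/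
def IsWeakKernelIn (X : Set A) {a b c : A} (k : a ⟶ b) (f : b ⟶ c) : Prop :=
  k ≫ f = 0 ∧ ∀ ⦃t : A⦄, t ∈ X → ∀ l : t ⟶ b, l ≫ f = 0 → ∃ m : t ⟶ a, m ≫ k = l

/-- `h : b ⟶ c` is a weak cokernel of `k : a ⟶ b` relative to the full subcategory `X`. -/
def IsWeakCokernelIn (X : Set A) {a b c : A} (h : b ⟶ c) (k : a ⟶ b) : Prop :=
  k ≫ h = 0 ∧ ∀ ⦃t : A⦄, t ∈ X → ∀ l : b ⟶ t, k ≫ l = 0 → ∃ m : c ⟶ t, h ≫ m = l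

/-- `g : x ⟶ a` is a right `X`-approximation of `a`. -/
def IsRightApprox (X : Set A) {x a : A} (g : x ⟶ a) : Prop :=
  x ∈ X ∧ ∀ ⦃t : A⦄, t ∈ X → ∀ h : t ⟶ a, ∃ k : t ⟶ x, k ≫ g = h

/-- `g : a ⟶ x` is a left `X`-approximation of `a`. -/
def IsLeftApprox (X : Set A) {a x : A} (g : a ⟶ x) : Prop :=
  x ∈ X ∧ ∀ ⦃t : A⦄, t ∈ X → ∀ h : a ⟶ t, ∃ k : x ⟶ t, g ≫ k = h

/-- `X` is a generating subcategory: every object is a quotient of an object of `X`. -/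
def Generating (X : Set A) : Prop := ∀ a : A, ∃ x ∈ X, ∃ p : x ⟶ a, Epi p

/-- `X` is a cogenerating subcategory: every object embeds into an object of `X`. -/
def Cogenerating (X : Set A) : Prop := ∀ a : A, ∃ x ∈ X, ∃ i : a ⟶ x, Mono i

/-- Every object admits a right `X`-approximation. -/
def ContravariantlyFinite (X : Set A) : Prop :=
  ∀ a : A, ∃ (x : A) (g : x ⟶ a), IsRightApprox X g

/-- Every object admits a left `X`-approximation. -/
def CovariantlyFinite (X : Set A) : Prop :=
  ∀ a : A, ∃ (x : A) (g : a ⟶ x), IsLeftApprox X g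

/-- `X` is functorially finite. -/
def FunctoriallyFinite (X : Set A) : Prop :=
  ContravariantlyFinite X ∧ CovariantlyFinite X

/-!
Build the sequence by taking, again and again, a right `X`-approximation of the kernel of the
previous map. Since `X` is generating, these approximations are epimorphisms, so the sequence is
spliced from short exact sequences `0 ⟶ Z (n+1) ⟶ Y (n+1) ⟶ Z n ⟶ 0` with `Z 0 = Y 0`, and
`Y (n+1) ⟶ Y n` factors as `Y (n+1) ↠ Z n ↪ Y n`. Exactness and the weak kernel property come
from the approximations. Dimension shifting along the short exact sequences gives
`Ext^i(Z n, X) = 0` for `0 < i < d - n`; the case `i = 1` says that maps `Z (n+1) ⟶ X` extend to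
`Y (n+1)`, which is the weak cokernel property.
-/

namespace CategoryTheory.ShortComplex.ShortExact

variable [HasExt.{w} A] {S : ShortComplex A}

lemma exists_f_comp_eq_of_subsingleton_ext (hS : S.ShortExact) {t : A}
    (h₃ : Subsingleton (Abelian.Ext.{w} S.X₃ t 1)) (l : S.X₁ ⟶ t) :
    ∃ m : S.X₂ ⟶ t, S.f ≫ m = l := by
  obtain ⟨m, hm⟩ := Abelian.Ext.contravariant_sequence_exact₁ hS t (Abelian.Ext.mk₀ l)
    (add_zero 1) (Subsingleton.elim _ _)
  refine ⟨Abelian.Ext.homEquiv₀ m, (Abelian.Ext.mk₀_bijective _ _).1 ?_⟩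
  rwa [← Abelian.Ext.mk₀_comp_mk₀, Abelian.Ext.mk₀_homEquiv₀_apply]

lemma subsingleton_ext_X₁ (hS : S.ShortExact) {t : A} {i : ℕ}
    (h₂ : Subsingleton (Abelian.Ext.{w} S.X₂ t i))
    (h₃ : Subsingleton (Abelian.Ext.{w} S.X₃ t (1 + i))) :
    Subsingleton (Abelian.Ext.{w} S.X₁ t i) := by
  refine subsingleton_of_forall_eq 0 fun e => ?_
  obtain ⟨e', he'⟩ := Abelian.Ext.contravariant_sequence_exact₁ hS t e rfl (Subsingleton.elim _ _)
  rw [← he', Subsingleton.elim e' 0, Abelian.Ext.comp_zero]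

end CategoryTheory.ShortComplex.ShortExact

omit [Abelian A] in
lemma IsRightApprox.epi {X : Set A} (hgen : Generating X) {x a : A} {g : x ⟶ a}
    (hg : IsRightApprox X g) : Epi g := by
  obtain ⟨y, hy, p, hp⟩ := hgen a
  obtain ⟨k, hk⟩ := hg.2 hy p
  exact epi_of_epi_fac hk

lemma IsWeakKernelIn.exact {X : Set A} (hgen : Generating X) {a b c : A} {k : a ⟶ b}
    {f : b ⟶ c} (hk : IsWeakKernelIn X k f) : (ShortComplex.mk k f hk.1).Exact := by
  rw [ShortComplex.exact_iff_epi_kernel_lift]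
  obtain ⟨y, hy, p, hp⟩ := hgen (kernel f)
  obtain ⟨m, hm⟩ := hk.2 hy (p ≫ kernel.ι f) (by simp)
  refine epi_of_epi_fac (f := m) (h := p) (cancel_mono (kernel.ι f) |>.1 ?_)
  simpa using hm

def ExtVanishingBelow [HasExt.{w} A] (X : Set A) (d : ℕ) : Prop :=
  ∀ x ∈ X, ∀ x' ∈ X, ∀ i : ℕ, 0 < i → i < d → Subsingleton (Abelian.Ext.{w} x x' i)

noncomputable section

namespace ApproxResolution

variable {P : A → A} (π : ∀ a, P a ⟶ a) {x₁ x₀ : A} (f : x₁ ⟶ x₀)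

/-- `stage n` bundles `cover n : obj (n + 1) ⟶ syzygy n` (the map `Y (n+1) ↠ Z n`) with its
endpoints, so that a single recursion defines all three. -/
def stage : ℕ → Σ (y z : A), y ⟶ z
  | 0 => ⟨x₁, x₀, f⟩
  | n + 1 => ⟨P (kernel (stage n).2.2), kernel (stage n).2.2, π _⟩

def obj : ℕ → A
  | 0 => x₀
  | n + 1 => (stage π f n).1

def syzygy (n : ℕ) : A := (stage π f n).2.1

def cover (n : ℕ) : obj π f (n + 1) ⟶ syzygy π f n := (stage π f n).2.2

def incl : ∀ n, syzygy π f n ⟶ obj π f n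
  | 0 => 𝟙 x₀
  | n + 1 => kernel.ι (cover π f n)

def map (n : ℕ) : obj π f (n + 1) ⟶ obj π f n := cover π f n ≫ incl π f n

lemma map_zero : map π f 0 = f := Category.comp_id f

instance mono_incl (n : ℕ) : Mono (incl π f n) := by
  cases n
  · exact inferInstanceAs (Mono (𝟙 x₀))
  · exact inferInstanceAs (Mono (kernel.ι _))

lemma incl_succ_comp_cover (n : ℕ) : incl π f (n + 1) ≫ cover π f n = 0 := kernel.condition _

def isLimitIncl (n : ℕ) : IsLimit (KernelFork.ofι _ (incl_succ_comp_cover π f n)) :=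
  kernelIsKernel _

lemma map_comp_map (n : ℕ) : map π f (n + 1) ≫ map π f n = 0 := by
  simp [map, reassoc_of% incl_succ_comp_cover π f n]

variable {π f}

instance epi_cover [∀ a, Epi (π a)] [Epi f] (n : ℕ) : Epi (cover π f n) := by
  cases n
  · assumption
  · exact inferInstanceAs (Epi (π _))

lemma shortExact [∀ a, Epi (π a)] [Epi f] (n : ℕ) :
    (ShortComplex.mk _ _ (incl_succ_comp_cover π f n)).ShortExact :=
  { exact := ShortComplex.exact_of_f_is_kernel _ (isLimitIncl π f n) }

lemma obj_mem {X : Set A} (hπ : ∀ a, P a ∈ X) (h₁ : x₁ ∈ X) (h₀ : x₀ ∈ X) :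
    ∀ n, obj π f n ∈ X
  | 0 => h₀
  | 1 => h₁
  | _ + 2 => hπ _

lemma isRightApprox_cover {X : Set A} (hπ : ∀ a, IsRightApprox X (π a)) (n : ℕ) :
    IsRightApprox X (cover π f (n + 1)) := hπ _

lemma isWeakKernelIn {X : Set A} (hπ : ∀ a, IsRightApprox X (π a)) (n : ℕ) :
    IsWeakKernelIn X (map π f (n + 1)) (map π f n) := by
  refine ⟨map_comp_map π f n, fun t ht l hl => ?_⟩
  obtain ⟨m, hm⟩ := (isRightApprox_cover hπ n).2 ht
    ((isLimitIncl π f n).lift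
      (KernelFork.ofι l ((cancel_mono (incl π f n)).1 (by simpa [map] using hl))))
  exact ⟨m, by rw [map, ← Category.assoc, hm]; exact Fork.IsLimit.lift_ι _⟩

section Ext

variable [HasExt.{w} A] [∀ a, Epi (π a)] [Epi f] {X : Set A} {d : ℕ}

lemma subsingleton_ext_syzygy (hX : ∀ n, obj π f n ∈ X)
    (hext : ExtVanishingBelow.{w} X d)
    {t : A} (ht : t ∈ X) :
    ∀ n i, 0 < i → i + n < d → Subsingleton (Abelian.Ext.{w} (syzygy π f n) t i)
  | 0, i, hi, hid => hext _ (hX 0) _ ht i hi (by omega)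
  | n + 1, i, hi, hid =>
    (shortExact n).subsingleton_ext_X₁ (hext _ (hX (n + 1)) _ ht i hi (by omega))
      (subsingleton_ext_syzygy hX hext ht n (1 + i) (by omega) (by omega))

lemma exists_incl_comp_eq (hX : ∀ n, obj π f n ∈ X)
    (hext : ExtVanishingBelow.{w} X d)
    {t : A} (ht : t ∈ X) :
    ∀ n < d, ∀ l : syzygy π f n ⟶ t, ∃ m : obj π f n ⟶ t, incl π f n ≫ m = l
  | 0, _, l => ⟨l, Category.id_comp l⟩
  | k + 1, hk, l =>
    (shortExact k).exists_f_comp_eq_of_subsingleton_ext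
      (subsingleton_ext_syzygy hX hext ht k 1 one_pos (by omega)) l

lemma isWeakCokernelIn (hX : ∀ n, obj π f n ∈ X)
    (hext : ExtVanishingBelow.{w} X d)
    {n : ℕ} (hn : n < d) : IsWeakCokernelIn X (map π f n) (map π f (n + 1)) := by
  refine ⟨map_comp_map π f n, fun t ht l hl => ?_⟩
  have hl : incl π f (n + 1) ≫ l = 0 :=
    (cancel_epi (cover π f (n + 1))).1 (by simpa [map] using hl)
  obtain ⟨l', hl'⟩ := (shortExact n).exact.desc' l hl
  obtain ⟨m, hm⟩ := exists_incl_comp_eq hX hext ht n hn l'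
  exact ⟨m, by rw [map, Category.assoc, hm, hl']⟩

end Ext

end ApproxResolution

end

theorem rigid_sequence_exists_general [CategoryTheory.HasExt.{w} A] (X : Set A) (d : ℕ)
    (hgen : Generating X) (hff : FunctoriallyFinite X)
    (hext : ∀ x ∈ X, ∀ x' ∈ X, ∀ i : ℕ, 0 < i → i < d →
      Subsingleton (CategoryTheory.Abelian.Ext x x' i))
    {x₁ x₀ : A} (h₁ : x₁ ∈ X) (h₀ : x₀ ∈ X) (f : x₁ ⟶ x₀) (hf : Epi f) :
    ∃ (Y : ℕ → A) (g : ∀ i, Y (i + 1) ⟶ Y i) (hY0 : Y 0 = x₀) (hY1 : Y 1 = x₁),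
      (∀ i ≤ d + 1, Y i ∈ X) ∧
      g 0 = eqToHom hY1 ≫ f ≫ eqToHom hY0.symm ∧
      (∀ i < d, IsWeakKernelIn X (g (i + 1)) (g i) ∧
        IsWeakCokernelIn X (g i) (g (i + 1))) ∧
      (∀ i < d, ∃ w : g (i + 1) ≫ g i = 0, (ShortComplex.mk (g (i + 1)) (g i) w).Exact) := by
  choose P π hπ using hff.1
  have : ∀ a, Epi (π a) := fun a => (hπ a).epi hgen
  have hX := ApproxResolution.obj_mem (π := π) (f := f) (fun a => (hπ a).1) h₁ h₀
  have hg₀ : ApproxResolution.map π f 0 = eqToHom (rfl : x₁ = x₁) ≫ f ≫ eqToHom rfl := by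
    simpa using ApproxResolution.map_zero π f
  refine ⟨ApproxResolution.obj π f, ApproxResolution.map π f, rfl, rfl, fun i _ => hX i, hg₀,
    fun i hi => ⟨ApproxResolution.isWeakKernelIn hπ i,
      ApproxResolution.isWeakCokernelIn hX hext hi⟩,
    fun i _ => ⟨_, (ApproxResolution.isWeakKernelIn hπ i).exact hgen⟩⟩

/-- If `X` is generating, cogenerating and functorially finite with
`Ext^i(X, X') = 0` for `0 < i < d`, then every epimorphism `f : X₁ ⟶ X₀` in `X`
extends to an exact sequence `X_{d+1} ⟶ ⋯ ⟶ X₁ ⟶ X₀` in which each `f_{i+1}` is a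
weak kernel of `f_i` and each `f_i` is a weak cokernel of `f_{i+1}`. -/
theorem rigid_sequence_exists [CategoryTheory.HasExt.{w} A] (X : Set A) (d : ℕ) (hd : 1 ≤ d)
    (hiso : ∀ ⦃a b : A⦄, a ∈ X → (a ≅ b) → b ∈ X)
    (hsum : ∀ ⦃a x : A⦄, x ∈ X → ∀ (i : a ⟶ x) (r : x ⟶ a), i ≫ r = 𝟙 a → a ∈ X)
    (hgen : Generating X) (hcog : Cogenerating X) (hff : FunctoriallyFinite X)
    (hext : ∀ x ∈ X, ∀ x' ∈ X, ∀ i : ℕ, 0 < i → i < d →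
      Subsingleton (CategoryTheory.Abelian.Ext x x' i))
    {x₁ x₀ : A} (h₁ : x₁ ∈ X) (h₀ : x₀ ∈ X) (f : x₁ ⟶ x₀) (hf : Epi f) :
    ∃ (Y : ℕ → A) (g : ∀ i, Y (i + 1) ⟶ Y i) (hY0 : Y 0 = x₀) (hY1 : Y 1 = x₁),
      (∀ i ≤ d + 1, Y i ∈ X) ∧
      g 0 = eqToHom hY1 ≫ f ≫ eqToHom hY0.symm ∧
      (∀ i < d, IsWeakKernelIn X (g (i + 1)) (g i) ∧
        IsWeakCokernelIn X (g i) (g (i + 1))) ∧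
      (∀ i < d, ∃ w : g (i + 1) ≫ g i = 0, (ShortComplex.mk (g (i + 1)) (g i) w).Exact) :=
  rigid_sequence_exists_general X d hgen hff hext h₁ h₀ f hf
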